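/- arXiv:1504.04165 — 3 statements merged into one kernel-verified Lean document; each statement's English description precedes it below -/
import Mathlib

section
/- The function g(β) = 1/π + (1 - β/π)·cot(β) (with g(π) = 0) is nonnegative on (0, 2π). -/
open Real

noncomputable def g (β : ℝ) : ℝ :=
  if β = π then 0 else 1 / π + (1 - β / π) * Real.cot β

/-!
Away from the zeros of `sin`, `π sin β · g β = sin β + (π - β) cos β`. This numerator has
derivative `(β - π) sin β ≤ 0` on `[0, 2π]` and vanishes at `π`, so it has the sign of
`π - β`, which is also the sign of `sin β`.
-/

namespace Real

theorem sin_nonpos_of_pi_le_of_le_two_pi {x : ℝ} (hπx : π ≤ x) (hx2 : x ≤ 2 * π) :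
    sin x ≤ 0 := by
  have := sin_nonneg_of_nonneg_of_le_pi (x := x - π) (by linarith) (by linarith)
  rwa [sin_sub_pi, neg_nonneg] at this

theorem sin_neg_of_pi_lt_of_lt_two_pi {x : ℝ} (hπx : π < x) (hx2 : x < 2 * π) : sin x < 0 := by
  have := sin_pos_of_pos_of_lt_pi (x := x - π) (by linarith) (by linarith)
  rwa [sin_sub_pi, neg_pos] at this

theorem sub_pi_mul_sin_nonpos {x : ℝ} (hx0 : 0 ≤ x) (hx2 : x ≤ 2 * π) :
    (x - π) * sin x ≤ 0 := by
  rcases le_total x π with hxπ | hπx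
  · exact mul_nonpos_of_nonpos_of_nonneg (sub_nonpos.2 hxπ)
      (sin_nonneg_of_nonneg_of_le_pi hx0 hxπ)
  · exact mul_nonpos_of_nonneg_of_nonpos (sub_nonneg.2 hπx)
      (sin_nonpos_of_pi_le_of_le_two_pi hπx hx2)

end Real

noncomputable def gNumerator (β : ℝ) : ℝ := sin β + (π - β) * cos β

theorem hasDerivAt_gNumerator (β : ℝ) : HasDerivAt gNumerator ((β - π) * sin β) β := by
  have h := (hasDerivAt_sin β).add (((hasDerivAt_id' β).const_sub π).mul (hasDerivAt_cos β))
  exact h.congr_deriv (by ring)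

theorem gNumerator_pi : gNumerator π = 0 := by simp [gNumerator]

theorem antitoneOn_gNumerator : AntitoneOn gNumerator (Set.Icc 0 (2 * π)) := by
  refine antitoneOn_of_hasDerivWithinAt_nonpos (convex_Icc _ _)
    (fun x _ => (hasDerivAt_gNumerator x).continuousAt.continuousWithinAt)
    (fun x _ => (hasDerivAt_gNumerator x).hasDerivWithinAt) fun x hx => ?_
  rw [interior_Icc] at hx
  exact sub_pi_mul_sin_nonpos hx.1.le hx.2.le

theorem g_eq_gNumerator_div {β : ℝ} (hβ : sin β ≠ 0) :
    g β = gNumerator β / (π * sin β) := by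
  have hβπ : β ≠ π := by rintro rfl; exact hβ sin_pi
  rw [g, if_neg hβπ, cot_eq_cos_div_sin, gNumerator]
  field_simp

theorem g_nonneg : ∀ β ∈ Set.Ioo (0 : ℝ) (2 * π), 0 ≤ g β := by
  rintro β ⟨hβ0, hβ2⟩
  have hβ : β ∈ Set.Icc 0 (2 * π) := ⟨hβ0.le, hβ2.le⟩
  have hπ : π ∈ Set.Icc 0 (2 * π) := ⟨pi_pos.le, by linarith [pi_pos]⟩
  rcases lt_trichotomy β π with hβπ | rfl | hπβ
  · have hsin := sin_pos_of_pos_of_lt_pi hβ0 hβπ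
    rw [g_eq_gNumerator_div hsin.ne']
    have hnum : gNumerator π ≤ gNumerator β := antitoneOn_gNumerator hβ hπ hβπ.le
    exact div_nonneg (gNumerator_pi ▸ hnum) (by positivity)
  · simp [g]
  · have hsin := sin_neg_of_pi_lt_of_lt_two_pi hπβ hβ2
    rw [g_eq_gNumerator_div hsin.ne]
    have hnum : gNumerator β ≤ gNumerator π := antitoneOn_gNumerator hπ hβ hπβ.le
    exact div_nonneg_of_nonpos (gNumerator_pi ▸ hnum)
      (mul_nonpos_of_nonneg_of_nonpos pi_pos.le hsin.le)
end

section
/- The function g(β) = 1/π + (1 - β/π)·cot(β) (with g(π) = 0) is decreasing on (0, π]. -/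
open Real

/-!
On `(0, π)` we have `g β = (sin β + (π - β) cos β) / (π sin β)` and
`g' β = -(sin β cos β + (π - β)) / (π sin² β)`. Putting `t = π - β`, the numerator of `g` is
`sin t - t cos t > 0` (this is `t < tan t` when `cos t > 0`), and the numerator of `-g'` is
`t - sin t cos t = (2t - sin 2t) / 2 > 0`. So `g` decreases strictly on `(0, π)` and stays
above `g π = 0`.
-/

namespace Real

theorem mul_cos_lt_sin {x : ℝ} (h₀ : 0 < x) (hπ : x < π) : x * cos x < sin x := by
  have hsin : 0 < sin x := sin_pos_of_pos_of_lt_pi h₀ hπ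
  rcases le_or_gt (cos x) 0 with hcos | hcos
  · nlinarith
  · have hx : x < π / 2 := by
      by_contra! hx
      exact hcos.not_ge (cos_nonpos_of_pi_div_two_le_of_le hx (by linarith [pi_pos]))
    have := lt_tan h₀ hx
    rwa [tan_eq_sin_div_cos, lt_div_iff₀ hcos] at this

theorem sin_mul_cos_lt {x : ℝ} (h : 0 < x) : sin x * cos x < x := by
  have := sin_lt (by linarith : 0 < 2 * x)
  rw [sin_two_mul] at this
  linarith

theorem hasDerivAt_cot {x : ℝ} (hx : sin x ≠ 0) : HasDerivAt cot (-1 / sin x ^ 2) x := by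
  rw [show cot = fun x => cos x / sin x from funext cot_eq_cos_div_sin]
  refine ((hasDerivAt_cos x).div (hasDerivAt_sin x) hx).congr_deriv ?_
  rw [← sin_sq_add_cos_sq x]
  ring

end Real

theorem g_eq_of_ne_pi {β : ℝ} (hβ : β ≠ π) : g β = 1 / π + (1 - β / π) * cot β :=
  if_neg hβ

theorem g_pos {β : ℝ} (h₀ : 0 < β) (hπ : β < π) : 0 < g β := by
  have hsin : 0 < sin β := sin_pos_of_pos_of_lt_pi h₀ hπ
  have hnum : 0 < sin β + (π - β) * cos β := by
    have := mul_cos_lt_sin (x := π - β) (by linarith) (by linarith)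
    rw [sin_pi_sub, cos_pi_sub] at this
    linarith
  have hform : g β = (sin β + (π - β) * cos β) / (π * sin β) := by
    rw [g_eq_of_ne_pi hπ.ne, cot_eq_cos_div_sin]
    field_simp
  rw [hform]
  positivity

theorem hasDerivAt_g_formula {β : ℝ} (hβ : sin β ≠ 0) :
    HasDerivAt (fun x => 1 / π + (1 - x / π) * cot x)
      (-(sin β * cos β + (π - β)) / (π * sin β ^ 2)) β := by
  have hlin : HasDerivAt (fun x : ℝ => 1 - x / π) (-(1 / π)) β := by
    simpa using ((hasDerivAt_id β).div_const π).const_sub 1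
  refine ((hlin.mul (hasDerivAt_cot hβ)).const_add (1 / π)).congr_deriv ?_
  rw [cot_eq_cos_div_sin]
  field_simp
  ring

theorem g_formula_strictAntiOn :
    StrictAntiOn (fun x => 1 / π + (1 - x / π) * cot x) (Set.Ioo 0 π) := by
  have hsin : ∀ x ∈ Set.Ioo 0 π, 0 < sin x := fun x hx => sin_pos_of_pos_of_lt_pi hx.1 hx.2
  refine strictAntiOn_of_deriv_neg (convex_Ioo 0 π)
    (fun x hx => (hasDerivAt_g_formula (hsin x hx).ne').continuousAt.continuousWithinAt)
    fun x hx => ?_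
  rw [interior_Ioo] at hx
  rw [(hasDerivAt_g_formula (hsin x hx).ne').deriv]
  have hnum : 0 < sin x * cos x + (π - x) := by
    have := sin_mul_cos_lt (x := π - x) (by linarith [hx.2])
    rw [sin_pi_sub, cos_pi_sub] at this
    linarith
  have hden : 0 < π * sin x ^ 2 := mul_pos pi_pos (pow_pos (hsin x hx) 2)
  exact div_neg_of_neg_of_pos (neg_neg_of_pos hnum) hden

theorem g_strictAntiOn : StrictAntiOn g (Set.Ioc (0 : ℝ) π) := by
  intro x hx y hy hxy
  rcases hy.2.eq_or_lt with rfl | hyπ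
  · rw [g, if_pos rfl]
    exact g_pos hx.1 hxy
  · have hxπ := hxy.trans hyπ
    rw [g_eq_of_ne_pi hxπ.ne, g_eq_of_ne_pi hyπ.ne]
    exact g_formula_strictAntiOn ⟨hx.1, hxπ⟩ ⟨hy.1, hyπ⟩ hxy
end

section
/- Let H = {(x₁,x₂) ∈ ℝ² : x₁ > 0} be a half-plane and S = (0,h) × (0,L) a rectangle in H. Then ∫_S ∫_H p(x,y;t) dy dx = hL − (L/√π)·t^{1/2} + R(t), where |R(t)| ≤ C e^{−h²/(8t)} t^{1/2} for some constant C and all small t > 0. -/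
open Real MeasureTheory

noncomputable def heatKernel2 (x y : EuclideanSpace ℝ (Fin 2)) (t : ℝ) : ℝ :=
  (4 * π * t)⁻¹ * Real.exp (-dist x y ^ 2 / (4 * t))

/-!
The kernel factorizes into one-dimensional Gaussians `exp (-ζ² / (4t))`, so the heat flowing
into the half-plane from `x` is `1 - Φ(x₁) / √(4πt)`, where `Φ(a) = ∫_a^∞ exp (-ζ² / (4t)) dζ`.
Integrating over the rectangle gives `hL - L / √(4πt) * ∫_0^h Φ`, and integration by parts
(`Φ' = -exp (-a² / (4t))`, `(2t exp (-a² / (4t)))' = -a exp (-a² / (4t))`) yields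
`∫_0^h Φ = hΦ(h) - 2t exp (-h² / (4t)) + 2t`. The constant `2t` produces the term `L √t / √π`,
and the rest is controlled by Mills' ratio `0 ≤ hΦ(h) ≤ 2t exp (-h² / (4t))`.
-/

open Set Filter Topology

namespace HeatContent

noncomputable def gaussExp (t ζ : ℝ) : ℝ := exp (-(4 * t)⁻¹ * ζ ^ 2)

noncomputable def gaussTail (t a : ℝ) : ℝ := ∫ ζ in Ioi a, gaussExp t ζ

variable {t : ℝ}

theorem gaussExp_nonneg (t ζ : ℝ) : 0 ≤ gaussExp t ζ := (exp_pos _).le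

theorem continuous_gaussExp (t : ℝ) : Continuous (gaussExp t) := by
  unfold gaussExp; fun_prop

theorem integrable_gaussExp (ht : 0 < t) : Integrable (gaussExp t) :=
  integrable_exp_neg_mul_sq (by positivity)

theorem integral_gaussExp (t : ℝ) : ∫ ζ, gaussExp t ζ = √(4 * π * t) := by
  simp only [gaussExp, integral_gaussian, div_inv_eq_mul]
  ring_nf

theorem gaussExp_le_exp_neg_sq_div (ht : 0 < t) (a : ℝ) :
    gaussExp t a ≤ exp (-a ^ 2 / (8 * t)) := by
  rw [gaussExp, exp_le_exp, neg_mul, neg_div, neg_le_neg_iff, inv_mul_eq_div]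
  gcongr
  norm_num

theorem hasDerivAt_gaussExp (t a : ℝ) :
    HasDerivAt (gaussExp t) (-(a / (2 * t)) * gaussExp t a) a := by
  have := ((hasDerivAt_pow 2 a).const_mul (-(4 * t)⁻¹)).exp
  refine this.congr_deriv ?_
  simp only [gaussExp]
  ring

theorem integral_Ioi_mul_gaussExp (ht : 0 < t) (c : ℝ) :
    ∫ ζ in Ioi c, ζ * gaussExp t ζ = 2 * t * gaussExp t c := by
  have hderiv : ∀ x ∈ Ici c,
      HasDerivAt (fun x => -(2 * t) * gaussExp t x) (x * gaussExp t x) x :=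
    fun x _ => ((hasDerivAt_gaussExp t x).const_mul _).congr_deriv (by field_simp)
  have hlim : Tendsto (fun x => -(2 * t) * gaussExp t x) atTop (𝓝 0) := by
    have hsq : Tendsto (fun x : ℝ => -(4 * t)⁻¹ * x ^ 2) atTop atBot :=
      (tendsto_pow_atTop two_ne_zero).const_mul_atTop_of_neg (by simpa using ht)
    simpa [gaussExp] using (tendsto_exp_atBot.comp hsq).const_mul (-(2 * t))
  rw [integral_Ioi_of_hasDerivAt_of_tendsto' hderiv
    (integrable_mul_exp_neg_mul_sq (by positivity)).integrableOn hlim]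
  ring

theorem gaussTail_nonneg (t a : ℝ) : 0 ≤ gaussTail t a :=
  setIntegral_nonneg measurableSet_Ioi fun ζ _ => gaussExp_nonneg t ζ

theorem integral_Iic_add_gaussTail (ht : 0 < t) (a : ℝ) :
    (∫ ζ in Iic a, gaussExp t ζ) + gaussTail t a = √(4 * π * t) := by
  rw [gaussTail, intervalIntegral.integral_Iic_add_Ioi (integrable_gaussExp ht).integrableOn
    (integrable_gaussExp ht).integrableOn, integral_gaussExp t]

theorem gaussTail_eq_sub_intervalIntegral (ht : 0 < t) (a : ℝ) :
    gaussTail t a = gaussTail t 0 - ∫ ζ in (0 : ℝ)..a, gaussExp t ζ := by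
  have := intervalIntegral.integral_Iic_sub_Iic (a := 0) (b := a)
    (integrable_gaussExp ht).integrableOn (integrable_gaussExp ht).integrableOn
  linarith [integral_Iic_add_gaussTail ht a, integral_Iic_add_gaussTail ht 0]

theorem hasDerivAt_gaussTail (ht : 0 < t) (a : ℝ) :
    HasDerivAt (gaussTail t) (-gaussExp t a) a := by
  rw [show gaussTail t = _ from funext (gaussTail_eq_sub_intervalIntegral ht)]
  exact ((continuous_gaussExp t).integral_hasStrictDerivAt 0 a).hasDerivAt.const_sub _

theorem continuous_gaussTail (ht : 0 < t) : Continuous (gaussTail t) :=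
  continuous_iff_continuousAt.2 fun a => (hasDerivAt_gaussTail ht a).continuousAt

theorem intervalIntegral_gaussTail (ht : 0 < t) (h : ℝ) :
    ∫ a in (0 : ℝ)..h, gaussTail t a = h * gaussTail t h - 2 * t * gaussExp t h + 2 * t := by
  have hderiv : ∀ a ∈ uIcc (0 : ℝ) h,
      HasDerivAt (fun a => a * gaussTail t a - 2 * t * gaussExp t a) (gaussTail t a) a :=
    fun a _ => (((hasDerivAt_id a).mul (hasDerivAt_gaussTail ht a)).sub
      ((hasDerivAt_gaussExp t a).const_mul (2 * t))).congr_deriv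
        (by simp only [id]; field_simp; ring)
  rw [intervalIntegral.integral_eq_sub_of_hasDerivAt hderiv
    ((continuous_gaussTail ht).intervalIntegrable _ _)]
  simp [gaussExp]

-- Mills' ratio bound: on `(a, ∞)` the weight `ζ / a` is at least one.
theorem mul_gaussTail_le (ht : 0 < t) {a : ℝ} (ha : 0 < a) :
    a * gaussTail t a ≤ 2 * t * gaussExp t a := by
  have hle : gaussTail t a ≤ ∫ ζ in Ioi a, a⁻¹ * (ζ * gaussExp t ζ) := by
    refine setIntegral_mono_on (integrable_gaussExp ht).integrableOn
      (((integrable_mul_exp_neg_mul_sq (by positivity)).const_mul _).integrableOn)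
      measurableSet_Ioi fun ζ hζ => ?_
    rw [← mul_assoc]
    exact le_mul_of_one_le_left (gaussExp_nonneg t ζ)
      ((one_le_inv_mul₀ ha).2 (le_of_lt hζ))
  rw [integral_const_mul, integral_Ioi_mul_gaussExp ht] at hle
  calc a * gaussTail t a ≤ a * (a⁻¹ * (2 * t * gaussExp t a)) := by gcongr
    _ = 2 * t * gaussExp t a := by field_simp

theorem abs_mul_gaussTail_sub_le (ht : 0 < t) {a : ℝ} (ha : 0 < a) :
    |a * gaussTail t a - 2 * t * gaussExp t a| ≤ 2 * t * gaussExp t a := by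
  have := mul_nonneg ha.le (gaussTail_nonneg t a)
  rw [abs_le]
  constructor <;> linarith [mul_gaussTail_le ht ha]

theorem two_mul_div_sqrt_four_pi_mul (ht : 0 < t) : 2 * t / √(4 * π * t) = √t / √π := by
  have h4 : √4 = (2 : ℝ) := by rw [show (4 : ℝ) = 2 ^ 2 by norm_num, sqrt_sq zero_le_two]
  rw [sqrt_mul (by positivity), sqrt_mul (by norm_num), h4]
  field_simp
  rw [sq_sqrt ht.le]

theorem setIntegral_euclideanSpace_fin_two_mul {𝕜 : Type*} [RCLike 𝕜] (s u : Set ℝ)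
    (f g : ℝ → 𝕜) :
    ∫ x in {x : EuclideanSpace ℝ (Fin 2) | x 0 ∈ s ∧ x 1 ∈ u}, f (x 0) * g (x 1)
      = (∫ a in s, f a) * ∫ b in u, g b := by
  have hmp : MeasurePreserving
      ((MeasurableEquiv.toLp 2 (Fin 2 → ℝ)).symm.trans MeasurableEquiv.finTwoArrow) :=
    (volume_preserving_finTwoArrow ℝ).comp
      (EuclideanSpace.volume_preserving_symm_measurableEquiv_toLp (Fin 2))
  rw [← setIntegral_prod_mul, ← Measure.volume_eq_prod, ← hmp.map_eq, setIntegral_map_equiv]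
  rfl

theorem heatKernel2_eq (x y : EuclideanSpace ℝ (Fin 2)) (t : ℝ) :
    heatKernel2 x y t = (4 * π * t)⁻¹ * gaussExp t (x 0 - y 0) * gaussExp t (x 1 - y 1) := by
  rw [heatKernel2, gaussExp, gaussExp, mul_assoc _ (exp _), ← exp_add, EuclideanSpace.dist_eq,
    sq_sqrt (by positivity), Fin.sum_univ_two, dist_eq, dist_eq, sq_abs, sq_abs]
  ring_nf

theorem integral_Ioi_gaussExp_sub (ht : 0 < t) (a : ℝ) :
    ∫ u in Ioi 0, gaussExp t (a - u) = √(4 * π * t) - gaussTail t a := by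
  have hshift := (Measure.measurePreserving_sub_left volume a).setIntegral_preimage_emb
    (Homeomorph.subLeft a).measurableEmbedding (gaussExp t) (Iio a)
  rw [show (a - ·) ⁻¹' Iio a = Ioi 0 by ext; simp] at hshift
  rw [hshift, ← integral_Iic_eq_integral_Iio, ← integral_Iic_add_gaussTail ht a]
  ring

theorem integral_halfPlane_heatKernel2 (ht : 0 < t) (x : EuclideanSpace ℝ (Fin 2)) :
    ∫ y in {y : EuclideanSpace ℝ (Fin 2) | 0 < y 0}, heatKernel2 x y t
      = 1 - gaussTail t (x 0) / √(4 * π * t) := by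
  have hH : {y : EuclideanSpace ℝ (Fin 2) | 0 < y 0} = {y | y 0 ∈ Ioi 0 ∧ y 1 ∈ univ} := by
    ext; simp
  simp only [heatKernel2_eq, hH]
  rw [setIntegral_euclideanSpace_fin_two_mul (Ioi 0) univ
    (fun a => (4 * π * t)⁻¹ * gaussExp t (x 0 - a)) (fun b => gaussExp t (x 1 - b)),
    integral_const_mul, setIntegral_univ, integral_sub_left_eq_self (gaussExp t) volume (x 1),
    integral_gaussExp, integral_Ioi_gaussExp_sub ht]
  have : √(4 * π * t) ^ 2 = 4 * π * t := sq_sqrt (by positivity)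
  field_simp
  rw [this]

theorem integral_rectangle_integral_halfPlane_heatKernel2 (ht : 0 < t) {h L : ℝ} (hh : 0 ≤ h)
    (hL : 0 ≤ L) :
    ∫ x in {x : EuclideanSpace ℝ (Fin 2) | x 0 ∈ Ioo 0 h ∧ x 1 ∈ Ioo 0 L},
        ∫ y in {y : EuclideanSpace ℝ (Fin 2) | 0 < y 0}, heatKernel2 x y t
      = h * L - L / √π * √t
          - L / √(4 * π * t) * (h * gaussTail t h - 2 * t * gaussExp t h) := by
  have hprod := setIntegral_euclideanSpace_fin_two_mul (Ioo 0 h) (Ioo 0 L)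
    (fun a => 1 - gaussTail t a / √(4 * π * t)) (fun _ => (1 : ℝ))
  simp only [mul_one] at hprod
  simp_rw [integral_halfPlane_heatKernel2 ht]
  rw [hprod, ← integral_Ioc_eq_integral_Ioo, ← intervalIntegral.integral_of_le hh,
    intervalIntegral.integral_sub intervalIntegrable_const
      (((continuous_gaussTail ht).div_const _).intervalIntegrable _ _),
    intervalIntegral.integral_div, intervalIntegral_gaussTail ht]
  simp only [intervalIntegral.integral_const, sub_zero, smul_eq_mul, mul_one, integral_const,
    MeasurableSet.univ, measureReal_restrict_apply, univ_inter, volume_real_Ioo, hL,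
    sup_of_le_left]
  linear_combination (-L) * two_mul_div_sqrt_four_pi_mul ht

end HeatContent

open HeatContent

theorem rectangle_heat_content (h L : ℝ) (hh : 0 < h) (hL : 0 < L) :
    let H : Set (EuclideanSpace ℝ (Fin 2)) := {x | 0 < x 0}
    let S : Set (EuclideanSpace ℝ (Fin 2)) :=
      {x | x 0 ∈ Set.Ioo 0 h ∧ x 1 ∈ Set.Ioo 0 L}
    ∃ C T : ℝ, 0 < T ∧ ∀ t ∈ Set.Ioo (0 : ℝ) T,
      |(∫ x in S, ∫ y in H, heatKernel2 x y t) - (h * L - (L / Real.sqrt π) * Real.sqrt t)| ≤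
        C * Real.exp (-h ^ 2 / (8 * t)) * Real.sqrt t := by
  intro H S
  refine ⟨L / √π, 1, one_pos, fun t ⟨ht, _⟩ => ?_⟩
  rw [integral_rectangle_integral_halfPlane_heatKernel2 ht hh.le hL.le, sub_sub_cancel_left,
    abs_neg, abs_mul, abs_of_nonneg (by positivity : 0 ≤ L / √(4 * π * t))]
  calc L / √(4 * π * t) * |h * gaussTail t h - 2 * t * gaussExp t h|
      ≤ L / √(4 * π * t) * (2 * t * exp (-h ^ 2 / (8 * t))) := by
        gcongr
        exact (abs_mul_gaussTail_sub_le ht hh).trans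
          (by gcongr; exact gaussExp_le_exp_neg_sq_div ht h)
    _ = L * (2 * t / √(4 * π * t)) * exp (-h ^ 2 / (8 * t)) := by ring
    _ = L / √π * exp (-h ^ 2 / (8 * t)) * √t := by
        rw [two_mul_div_sqrt_four_pi_mul ht]
        ring
end
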